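/- Let P be a regular Markov chain on state space [N] with stationary distribution π and spectral expansion λ. Let m ≥ 1, ℓ ≥ 0, t > 0, and let H_1,…,H_N ∈ ℂ^{m×m} satisfy ‖H_i‖₂ ≤ ℓ for all i and Σ_{i∈[N]} π_i H_i = 0. Let E be the block-diagonal matrix with i-th diagonal block exp(tH_i), let P̃ := P ⊗ I_m, and assume α₄ := λ·exp(tℓ) < 1. Let z_0 ∈ U (so z_0^⊥ = 0) and define z_i := P̃ᵀ E* z_{i−1} for i ≥ 1. Then for every i ≥ 1, ‖z_i^⊥‖_π ≤ ( λ(exp(tℓ)−1) / (1 − λ·exp(tℓ)) ) · max_{0 ≤ j < i} ‖z_j^∥‖_π. -/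

import Mathlib

open scoped BigOperators Kronecker ComplexOrder
open Matrix

/-- A (row-stochastic) Markov chain on a finite state space: nonnegative entries, rows sum to 1. -/
def IsMarkov {S : Type*} [Fintype S] (P : Matrix S S ℝ) : Prop :=
  (∀ i j, 0 ≤ P i j) ∧ ∀ i, ∑ j, P i j = 1

/-- A Markov chain is regular if some positive power has all entries strictly positive. -/
def IsRegularMC {S : Type*} [Fintype S] [DecidableEq S] (P : Matrix S S ℝ) : Prop :=
  ∃ k : ℕ, 0 < k ∧ ∀ i j, 0 < (P ^ k) i j

/-- `π` is a stationary distribution of `P`: strictly positive entries, sums to 1, `πᵀ P = πᵀ`. -/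
def IsStationaryMC {S : Type*} [Fintype S] (P : Matrix S S ℝ) (π : S → ℝ) : Prop :=
  (∀ i, 0 < π i) ∧ (∑ i, π i = 1) ∧ ∀ j, ∑ i, π i * P i j = π j

/-- A probability vector. -/
def IsProbVec {S : Type*} [Fintype S] (φ : S → ℝ) : Prop :=
  (∀ i, 0 ≤ φ i) ∧ ∑ i, φ i = 1

/-- The `π`-norm of a real vector `φ`: `‖φ‖_π = sqrt (∑ i, φ i ^ 2 / π i)`. -/
noncomputable def piNormR {S : Type*} [Fintype S] (π φ : S → ℝ) : ℝ :=
  Real.sqrt (∑ i, φ i ^ 2 / π i)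

/-- The `π`-inner product `⟨x, y⟩_π = y* Π⁻¹ x` on `ℂ^S`. -/
noncomputable def piInner {S : Type*} [Fintype S] (π : S → ℝ) (x y : S → ℂ) : ℂ :=
  ∑ i, (starRingEnd ℂ) (y i) * x i / (π i : ℂ)

/-- The `π`-norm of a complex vector. -/
noncomputable def piNorm {S : Type*} [Fintype S] (π : S → ℝ) (x : S → ℂ) : ℝ :=
  Real.sqrt (∑ i, ‖x i‖ ^ 2 / π i)

/-- The spectral expansion `λ(P)`: the supremum of `‖Pᵀ x‖_π / ‖x‖_π` over nonzero `x`
with `⟨x, π⟩_π = 0`. -/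
noncomputable def specExp {S : Type*} [Fintype S] (P : Matrix S S ℝ) (π : S → ℝ) : ℝ :=
  sSup {r : ℝ | ∃ x : S → ℂ, x ≠ 0 ∧ piInner π x (fun i => (π i : ℂ)) = 0 ∧
    r = piNorm π ((P.map Complex.ofReal)ᵀ *ᵥ x) / piNorm π x}

/-- The spectral (operator 2-)norm of a matrix. -/
noncomputable def spectralNormM {𝕜 : Type*} [RCLike 𝕜] {m n : Type*} [Fintype m] [Fintype n]
    (A : Matrix m n 𝕜) : ℝ :=
  sSup {r : ℝ | ∃ x : n → 𝕜, x ≠ 0 ∧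
    r = Real.sqrt (∑ i, ‖(A *ᵥ x) i‖ ^ 2) / Real.sqrt (∑ j, ‖x j‖ ^ 2)}

/-- The probability that a `k`-step random walk on `P` started from `φ` follows the
trajectory `v`, i.e. `φ (v 1) * ∏ j, P (v j) (v (j+1))`. -/
noncomputable def walkWeight {S : Type*} [Fintype S] (P : Matrix S S ℝ) (φ : S → ℝ)
    {k : ℕ} (v : Fin k → S) : ℝ :=
  if h : 0 < k then
    φ (v ⟨0, h⟩) * ∏ j : Fin (k - 1),
      P (v ⟨(j : ℕ), by have := j.isLt; omega⟩) (v ⟨(j : ℕ) + 1, by have := j.isLt; omega⟩)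
  else 0

/-- The probability of an event `E` under a `k`-step random walk on `P` started from `φ`. -/
noncomputable def walkProb {S : Type*} [Fintype S] (P : Matrix S S ℝ) (φ : S → ℝ)
    {k : ℕ} (E : Set (Fin k → S)) : ℝ :=
  ∑ v : Fin k → S, E.indicator (fun u => walkWeight P φ u) v

/-- The matrix exponential, `exp A = ∑ A^k / k!`. -/
noncomputable def mexp {m : Type*} [Fintype m] [DecidableEq m]
    (A : Matrix m m ℂ) : Matrix m m ℂ :=
  ∑' k : ℕ, ((k.factorial : ℂ)⁻¹) • A ^ k

/-- The block-diagonal matrix `diag (M 1, …, M N)`. -/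
def blockDiag' {S m : Type*} [DecidableEq S] (M : S → Matrix m m ℂ) :
    Matrix (S × m) (S × m) ℂ :=
  Matrix.of fun p q => if p.1 = q.1 then M p.1 p.2 q.2 else 0

/-- The `π`-inner product `⟨x, y⟩_π = y* (Π⁻¹ ⊗ I_m) x` on `ℂ^{N m}`. -/
noncomputable def piInnerKron {N m : ℕ} (π : Fin N → ℝ) (x y : Fin N × Fin m → ℂ) : ℂ :=
  ∑ p, (starRingEnd ℂ) (y p) * x p / (π p.1 : ℂ)

/-- The `π`-norm on `ℂ^{N m}`. -/
noncomputable def piNormKron {N m : ℕ} (π : Fin N → ℝ) (x : Fin N × Fin m → ℂ) : ℝ :=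
  Real.sqrt (∑ p, ‖x p‖ ^ 2 / π p.1)

/-- Membership in the subspace `U = {π ⊗ w : w ∈ ℂ^m}`. -/
def memU {N m : ℕ} (π : Fin N → ℝ) (x : Fin N × Fin m → ℂ) : Prop :=
  ∃ w : Fin m → ℂ, ∀ p, x p = (π p.1 : ℂ) * w p.2

/-- `π`-orthogonality to the subspace `U = {π ⊗ w : w ∈ ℂ^m}`. -/
noncomputable def perpU {N m : ℕ} (π : Fin N → ℝ) (x : Fin N × Fin m → ℂ) : Prop :=
  ∀ w : Fin m → ℂ, piInnerKron π x (fun p => (π p.1 : ℂ) * w p.2) = 0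


/-!
When `∑ π = 1`, the `π`-orthogonal projection onto `U` is `x ↦ π ⊗ (∑ᵢ x (i, ·))`, so `U^⊥` is the
space of vectors with zero column sums. Because `P` is stochastic and `π` stationary, `P̃ᵀ` fixes
`U` and preserves column sums; hence it commutes with the projection onto `U^⊥`, and, column by
column, it contracts `U^⊥` by `λ`. The projection kills `z_i^∥`, so
`z_{i+1}^⊥ = P̃ᵀ ((E* - 1) z_i^∥ + E* z_i^⊥)^⊥`, and the blockwise bounds
`‖exp A - 1‖ ≤ exp ‖A‖ - 1`, `‖exp A‖ ≤ exp ‖A‖` give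
`‖z_{i+1}^⊥‖ ≤ λ (e^{tℓ} - 1) ‖z_i^∥‖ + λ e^{tℓ} ‖z_i^⊥‖`.
Starting from `z_0^⊥ = 0`, this recursion with ratio `λ e^{tℓ} < 1` yields the factor
`λ (e^{tℓ} - 1) / (1 - λ e^{tℓ})`.
-/

open scoped Matrix.Norms.L2Operator Nat

theorem NormedSpace.norm_exp_sub_one_le {𝕂 𝔸 : Type*} [RCLike 𝕂] [NormedRing 𝔸]
    [NormedAlgebra 𝕂 𝔸] [CompleteSpace 𝔸] (x : 𝔸) :
    ‖NormedSpace.exp x - 1‖ ≤ Real.exp ‖x‖ - 1 := by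
  have hx : HasSum (fun n => ((n + 1)!⁻¹ : 𝕂) • x ^ (n + 1)) (NormedSpace.exp x - 1) := by
    simpa using (hasSum_nat_add_iff' 1).mpr (NormedSpace.exp_series_hasSum_exp' (𝕂 := 𝕂) x)
  have hr : HasSum (fun n => ‖x‖ ^ (n + 1) / (n + 1)!) (Real.exp ‖x‖ - 1) := by
    simpa [← Real.exp_eq_exp_ℝ] using
      (hasSum_nat_add_iff' 1).mpr (NormedSpace.expSeries_div_hasSum_exp ‖x‖)
  refine hx.norm_le_of_bounded hr fun n => ?_
  rw [norm_smul, norm_inv, RCLike.norm_natCast, inv_mul_eq_div]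
  gcongr
  exact norm_pow_le' x n.succ_pos

theorem NormedSpace.norm_exp_le {𝕂 𝔸 : Type*} [RCLike 𝕂] [NormedRing 𝔸]
    [NormedAlgebra 𝕂 𝔸] [CompleteSpace 𝔸] (h1 : ‖(1 : 𝔸)‖ ≤ 1) (x : 𝔸) :
    ‖NormedSpace.exp x‖ ≤ Real.exp ‖x‖ :=
  calc ‖NormedSpace.exp x‖ ≤ ‖NormedSpace.exp x - 1‖ + ‖(1 : 𝔸)‖ := norm_le_norm_sub_add _ _
    _ ≤ Real.exp ‖x‖ - 1 + 1 := add_le_add (norm_exp_sub_one_le (𝕂 := 𝕂) x) h1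
    _ = Real.exp ‖x‖ := sub_add_cancel _ _

lemma mexp_eq_exp {m : Type*} [Fintype m] [DecidableEq m] (A : Matrix m m ℂ) :
    mexp A = NormedSpace.exp A := by
  rw [NormedSpace.exp_eq_tsum ℂ]
  rfl

lemma Matrix.l2_opNorm_one_le {𝕜 n : Type*} [RCLike 𝕜] [Fintype n] [DecidableEq n] :
    ‖(1 : Matrix n n 𝕜)‖ ≤ 1 := by
  rw [← Matrix.l2_opNorm_toEuclideanCLM, map_one]
  exact ContinuousLinearMap.norm_id_le

lemma spectralNormM_nonneg {𝕜 : Type*} [RCLike 𝕜] {m n : Type*} [Fintype m] [Fintype n]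
    (A : Matrix m n 𝕜) : 0 ≤ spectralNormM A :=
  Real.sSup_nonneg fun _ ⟨_, _, hr⟩ => hr ▸ by positivity

lemma l2_opNorm_le_spectralNormM {𝕜 : Type*} [RCLike 𝕜] {m n : Type*} [Fintype m] [Fintype n]
    [DecidableEq n] (A : Matrix m n 𝕜) : ‖A‖ ≤ spectralNormM A := by
  have ratio_eq : ∀ x : n → 𝕜, ‖WithLp.toLp 2 (A *ᵥ x)‖ / ‖WithLp.toLp 2 x‖ =
      Real.sqrt (∑ i, ‖(A *ᵥ x) i‖ ^ 2) / Real.sqrt (∑ j, ‖x j‖ ^ 2) := fun x => by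
    simp only [EuclideanSpace.norm_eq]
  have hbdd : BddAbove {r : ℝ | ∃ x : n → 𝕜, x ≠ 0 ∧
      r = Real.sqrt (∑ i, ‖(A *ᵥ x) i‖ ^ 2) / Real.sqrt (∑ j, ‖x j‖ ^ 2)} := by
    refine ⟨‖A‖, ?_⟩
    rintro _ ⟨x, -, rfl⟩
    rw [← ratio_eq]
    exact div_le_of_le_mul₀ (norm_nonneg _) (norm_nonneg _) (A.l2_opNorm_mulVec (WithLp.toLp 2 x))
  rw [Matrix.l2_opNorm_def]
  refine ContinuousLinearMap.opNorm_le_bound _ (spectralNormM_nonneg A) fun x => ?_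
  rcases eq_or_ne x 0 with rfl | hx
  · simp
  have hx' : WithLp.ofLp x ≠ 0 := by simpa using hx
  have := le_csSup hbdd ⟨_, hx', rfl⟩
  rw [← ratio_eq, div_le_iff₀ (norm_pos_iff.mpr hx)] at this
  exact this

lemma norm_conjTranspose_mexp_le {m : Type*} [Fintype m] [DecidableEq m] (A : Matrix m m ℂ) :
    ‖(mexp A)ᴴ‖ ≤ Real.exp ‖A‖ := by
  rw [Matrix.l2_opNorm_conjTranspose, mexp_eq_exp]
  exact NormedSpace.norm_exp_le (𝕂 := ℂ) Matrix.l2_opNorm_one_le A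

lemma norm_conjTranspose_mexp_sub_one_le {m : Type*} [Fintype m] [DecidableEq m]
    (A : Matrix m m ℂ) : ‖(mexp A)ᴴ - 1‖ ≤ Real.exp ‖A‖ - 1 := by
  rw [← Matrix.conjTranspose_one, ← Matrix.conjTranspose_sub, Matrix.l2_opNorm_conjTranspose,
    mexp_eq_exp]
  exact NormedSpace.norm_exp_sub_one_le (𝕂 := ℂ) A

lemma norm_ofReal_smul_le_of_spectralNormM_le {m : Type*} [Fintype m] [DecidableEq m]
    {H : Matrix m m ℂ} {t ℓ : ℝ} (ht : 0 ≤ t) (hH : spectralNormM H ≤ ℓ) :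
    ‖(t : ℂ) • H‖ ≤ t * ℓ := by
  rw [norm_smul, Complex.norm_of_nonneg ht]
  exact mul_le_mul_of_nonneg_left ((l2_opNorm_le_spectralNormM H).trans hH) ht

section WeightedNorm

variable {S : Type*} [Fintype S] {π : S → ℝ}

lemma piNorm_nonneg (π : S → ℝ) (x : S → ℂ) : 0 ≤ piNorm π x := Real.sqrt_nonneg _

lemma piNorm_sq (hπ : ∀ i, 0 ≤ π i) (x : S → ℂ) : piNorm π x ^ 2 = ∑ i, ‖x i‖ ^ 2 / π i :=
  Real.sq_sqrt (Finset.sum_nonneg fun i _ => div_nonneg (sq_nonneg _) (hπ i))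

lemma piNorm_le_mul_piNorm (hπ : ∀ i, 0 ≤ π i) {c : ℝ} (hc : 0 ≤ c) {x y : S → ℂ}
    (h : ∑ i, ‖y i‖ ^ 2 / π i ≤ c ^ 2 * ∑ i, ‖x i‖ ^ 2 / π i) :
    piNorm π y ≤ c * piNorm π x :=
  (Real.sqrt_le_left (mul_nonneg hc (piNorm_nonneg π x))).mpr (by rwa [mul_pow, piNorm_sq hπ])

lemma piNorm_pos (hπ : ∀ i, 0 < π i) {x : S → ℂ} (hx : x ≠ 0) : 0 < piNorm π x := by
  obtain ⟨i, hi⟩ := Function.ne_iff.mp hx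
  refine Real.sqrt_pos.mpr (Finset.sum_pos' (fun j _ => div_nonneg (sq_nonneg _) (hπ j).le)
    ⟨i, Finset.mem_univ i, div_pos (pow_pos (norm_pos_iff.mpr hi) 2) (hπ i)⟩)

lemma piNorm_eq_norm_toLp (hπ : ∀ i, 0 ≤ π i) (x : S → ℂ) :
    piNorm π x = ‖(WithLp.toLp 2 fun i => (Real.sqrt (π i))⁻¹ • x i : EuclideanSpace ℂ S)‖ := by
  rw [EuclideanSpace.norm_eq, piNorm]
  congr 1
  refine Finset.sum_congr rfl fun i _ => ?_
  rw [PiLp.toLp_apply, norm_smul, mul_pow, norm_inv, Real.norm_of_nonneg (Real.sqrt_nonneg _),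
    inv_pow, Real.sq_sqrt (hπ i), inv_mul_eq_div]

lemma piNorm_add_le (hπ : ∀ i, 0 ≤ π i) (x y : S → ℂ) :
    piNorm π (x + y) ≤ piNorm π x + piNorm π y := by
  simp only [piNorm_eq_norm_toLp hπ]
  refine le_of_eq_of_le ?_ (norm_add_le _ _)
  rw [← WithLp.toLp_add]
  congr 2
  ext i
  exact smul_add _ _ _

/-- Subtracting `π * ∑ x` is the `π`-orthogonal projection away from `π` (as `∑ π = 1`): it
lowers `‖x‖_π ^ 2` by exactly `‖∑ x‖ ^ 2`. -/
lemma piNorm_sub_mul_sum_le (hπ : ∀ i, 0 < π i) (hπ1 : ∑ i, π i = 1) (x : S → ℂ) :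
    piNorm π (fun i => x i - π i * ∑ j, x j) ≤ piNorm π x := by
  set s := ∑ j, x j
  rw [← one_mul (piNorm π x)]
  refine piNorm_le_mul_piNorm (fun i => (hπ i).le) zero_le_one ?_
  have hterm : ∀ i, ‖x i - π i * s‖ ^ 2 / π i =
      ‖x i‖ ^ 2 / π i - 2 * (x i * (starRingEnd ℂ) s).re + π i * ‖s‖ ^ 2 := fun i => by
    have := (hπ i).ne'
    simp only [Complex.sq_norm, Complex.normSq_sub, Complex.normSq_ofReal,
      map_mul, Complex.conj_ofReal, Complex.mul_re, Complex.mul_im, Complex.ofReal_re,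
      Complex.ofReal_im]
    field_simp
    ring
  have hcross : ∑ i, (x i * (starRingEnd ℂ) s).re = ‖s‖ ^ 2 := by
    rw [← Complex.re_sum, ← Finset.sum_mul, Complex.mul_conj, Complex.ofReal_re, Complex.sq_norm]
  simp only [hterm, Finset.sum_add_distrib, Finset.sum_sub_distrib, ← Finset.mul_sum,
    ← Finset.sum_mul, hcross, hπ1]
  linarith [sq_nonneg ‖s‖]

end WeightedNorm

section SpectralExpansion

variable {S : Type*} [Fintype S] {P : Matrix S S ℝ} {π : S → ℝ}

lemma transpose_map_ofReal_mulVec_apply (P : Matrix S S ℝ) (x : S → ℂ) (j : S) :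
    ((P.map Complex.ofReal)ᵀ *ᵥ x) j = ∑ i, (P i j : ℂ) * x i := by
  simp [Matrix.mulVec, dotProduct]

/-- Cauchy–Schwarz against the weights `P i j * π i`, whose total is `π j` by stationarity. -/
lemma sq_norm_transpose_mulVec_apply_div_le (hP : IsMarkov P) (hπ : IsStationaryMC P π)
    (x : S → ℂ) (j : S) :
    ‖((P.map Complex.ofReal)ᵀ *ᵥ x) j‖ ^ 2 / π j ≤ ∑ i, P i j * (‖x i‖ ^ 2 / π i) := by
  obtain ⟨hPnn, -⟩ := hP
  obtain ⟨hpos, -, hstat⟩ := hπ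
  have htri : ‖((P.map Complex.ofReal)ᵀ *ᵥ x) j‖ ≤ ∑ i, P i j * ‖x i‖ := by
    rw [transpose_map_ofReal_mulVec_apply]
    refine (norm_sum_le _ _).trans_eq (Finset.sum_congr rfl fun i _ => ?_)
    rw [norm_mul, Complex.norm_of_nonneg (hPnn i j)]
  have hcs : (∑ i, P i j * ‖x i‖) ^ 2 ≤ (∑ i, P i j * π i) * ∑ i, P i j * (‖x i‖ ^ 2 / π i) :=
    Finset.sum_sq_le_sum_mul_sum_of_sq_le_mul _
      (fun i _ => mul_nonneg (hPnn i j) (hpos i).le)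
      (fun i _ => mul_nonneg (hPnn i j) (div_nonneg (sq_nonneg _) (hpos i).le))
      (fun i _ => le_of_eq (by field_simp [(hpos i).ne']))
  have hw : ∑ i, P i j * π i = π j := by simp_rw [mul_comm (P _ j)]; exact hstat j
  rw [div_le_iff₀ (hpos j), mul_comm, ← hw]
  exact (pow_le_pow_left₀ (norm_nonneg _) htri 2).trans hcs

lemma piNorm_transpose_mulVec_le (hP : IsMarkov P) (hπ : IsStationaryMC P π) (x : S → ℂ) :
    piNorm π ((P.map Complex.ofReal)ᵀ *ᵥ x) ≤ piNorm π x := by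
  rw [← one_mul (piNorm π x)]
  refine piNorm_le_mul_piNorm (fun i => (hπ.1 i).le) zero_le_one ?_
  calc ∑ j, ‖((P.map Complex.ofReal)ᵀ *ᵥ x) j‖ ^ 2 / π j
      ≤ ∑ j, ∑ i, P i j * (‖x i‖ ^ 2 / π i) :=
        Finset.sum_le_sum fun j _ => sq_norm_transpose_mulVec_apply_div_le hP hπ x j
    _ = 1 ^ 2 * ∑ i, ‖x i‖ ^ 2 / π i := by
        rw [Finset.sum_comm, one_pow, one_mul]
        simp_rw [← Finset.sum_mul, hP.2, one_mul]

lemma specExp_nonneg (P : Matrix S S ℝ) (π : S → ℝ) : 0 ≤ specExp P π :=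
  Real.sSup_nonneg fun _ ⟨_, _, _, hr⟩ => hr ▸ div_nonneg (piNorm_nonneg _ _) (piNorm_nonneg _ _)

lemma piNorm_transpose_mulVec_le_specExp (hP : IsMarkov P) (hπ : IsStationaryMC P π)
    {x : S → ℂ} (hx : ∑ i, x i = 0) :
    piNorm π ((P.map Complex.ofReal)ᵀ *ᵥ x) ≤ specExp P π * piNorm π x := by
  rcases eq_or_ne x 0 with rfl | hx0
  · simp [piNorm]
  have horth : piInner π x (fun i => (π i : ℂ)) = 0 := by
    rw [← hx, piInner]
    refine Finset.sum_congr rfl fun i _ => ?_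
    rw [Complex.conj_ofReal, mul_div_cancel_left₀ _ (Complex.ofReal_ne_zero.mpr (hπ.1 i).ne')]
  have hbdd : BddAbove {r : ℝ | ∃ x : S → ℂ, x ≠ 0 ∧ piInner π x (fun i => (π i : ℂ)) = 0 ∧
      r = piNorm π ((P.map Complex.ofReal)ᵀ *ᵥ x) / piNorm π x} := by
    refine ⟨1, ?_⟩
    rintro _ ⟨y, -, -, rfl⟩
    exact div_le_one_of_le₀ (piNorm_transpose_mulVec_le hP hπ y) (piNorm_nonneg _ _)
  have := le_csSup hbdd ⟨x, hx0, horth, rfl⟩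
  rwa [div_le_iff₀ (piNorm_pos hπ.1 hx0)] at this

end SpectralExpansion

lemma kronecker_one_transpose_mulVec_apply {R n m : Type*} [CommSemiring R] [Fintype n]
    [Fintype m] [DecidableEq m] (A : Matrix n n R) (x : n × m → R) (j : n) (k : m) :
    ((A ⊗ₖ (1 : Matrix m m R))ᵀ *ᵥ x) (j, k) = (Aᵀ *ᵥ fun i => x (i, k)) j := by
  simp [Matrix.mulVec, dotProduct, Fintype.sum_prod_type, Matrix.one_apply]

lemma blockDiag'_mulVec_apply {S m : Type*} [Fintype S] [Fintype m] [DecidableEq S]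
    (M : S → Matrix m m ℂ) (x : S × m → ℂ) (i : S) (k : m) :
    (blockDiag' M *ᵥ x) (i, k) = (M i *ᵥ fun l => x (i, l)) k := by
  simp [_root_.blockDiag', Matrix.mulVec, dotProduct, Fintype.sum_prod_type]

lemma conjTranspose_blockDiag' {S m : Type*} [DecidableEq S] (M : S → Matrix m m ℂ) :
    (blockDiag' M)ᴴ = blockDiag' fun i => (M i)ᴴ := by
  ext ⟨i, k⟩ ⟨j, l⟩
  by_cases h : i = j <;> simp [_root_.blockDiag', h, eq_comm]

lemma blockDiag'_sub_one {S m : Type*} [DecidableEq S] [DecidableEq m] (M : S → Matrix m m ℂ) :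
    blockDiag' (fun i => M i - 1) = blockDiag' M - 1 := by
  ext ⟨i, k⟩ ⟨j, l⟩
  by_cases h : i = j <;> simp [_root_.blockDiag', Matrix.one_apply, h]

section Kronecker

variable {N m : ℕ} {P : Matrix (Fin N) (Fin N) ℝ} {π : Fin N → ℝ}

lemma piNormKron_eq_piNorm (π : Fin N → ℝ) (x : Fin N × Fin m → ℂ) :
    piNormKron π x = piNorm (fun p => π p.1) x := rfl

lemma piNormKron_le_of_forall_col (hπ : ∀ i, 0 ≤ π i) {c : ℝ} (hc : 0 ≤ c)
    {x y : Fin N × Fin m → ℂ}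
    (h : ∀ k, piNorm π (fun i => y (i, k)) ≤ c * piNorm π (fun i => x (i, k))) :
    piNormKron π y ≤ c * piNormKron π x := by
  simp only [piNormKron_eq_piNorm]
  refine piNorm_le_mul_piNorm (fun p : Fin N × Fin m => hπ p.1) hc ?_
  simp only [Fintype.sum_prod_type_right, Finset.mul_sum]
  refine Finset.sum_le_sum fun k _ => ?_
  have := pow_le_pow_left₀ (piNorm_nonneg _ _) (h k) 2
  rwa [mul_pow, piNorm_sq hπ, piNorm_sq hπ, Finset.mul_sum] at this

lemma piNormKron_le_of_forall_row (hπ : ∀ i, 0 ≤ π i) {c : ℝ} (hc : 0 ≤ c)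
    {x y : Fin N × Fin m → ℂ}
    (h : ∀ i, ‖(WithLp.toLp 2 fun k => y (i, k) : EuclideanSpace ℂ (Fin m))‖ ≤
      c * ‖(WithLp.toLp 2 fun k => x (i, k) : EuclideanSpace ℂ (Fin m))‖) :
    piNormKron π y ≤ c * piNormKron π x := by
  simp only [piNormKron_eq_piNorm]
  refine piNorm_le_mul_piNorm (fun p : Fin N × Fin m => hπ p.1) hc ?_
  simp only [Fintype.sum_prod_type, ← Finset.sum_div, Finset.mul_sum, mul_div_assoc']
  refine Finset.sum_le_sum fun i _ => div_le_div_of_nonneg_right ?_ (hπ i)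
  have := pow_le_pow_left₀ (norm_nonneg _) (h i) 2
  simpa only [mul_pow, EuclideanSpace.norm_sq_eq, PiLp.toLp_apply, Finset.mul_sum] using this

lemma piNormKron_blockDiag'_mulVec_le (hπ : ∀ i, 0 ≤ π i)
    {M : Fin N → Matrix (Fin m) (Fin m) ℂ} {c : ℝ} (hc : 0 ≤ c) (hM : ∀ i, ‖M i‖ ≤ c)
    (x : Fin N × Fin m → ℂ) :
    piNormKron π (blockDiag' M *ᵥ x) ≤ c * piNormKron π x := by
  refine piNormKron_le_of_forall_row hπ hc fun i => ?_
  rw [show (fun k => (blockDiag' M *ᵥ x) (i, k)) = M i *ᵥ fun l => x (i, l) from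
    funext (blockDiag'_mulVec_apply M x i)]
  have h := (M i).l2_opNorm_mulVec (WithLp.toLp 2 fun l => x (i, l))
  exact h.trans (mul_le_mul_of_nonneg_right (hM i) (norm_nonneg _))

/-- `π ⊗ (∑ i, x (i, ·))` is the `π`-orthogonal projection of `x` onto `U` when `∑ π = 1`,
so this is `x ↦ x^⊥`. -/
noncomputable def perpPart (π : Fin N → ℝ) : (Fin N × Fin m → ℂ) →ₗ[ℂ] Fin N × Fin m → ℂ where
  toFun x p := x p - π p.1 * ∑ i, x (i, p.2)
  map_add' x y := by
    ext p
    simp only [Pi.add_apply, Finset.sum_add_distrib]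
    ring
  map_smul' c x := by
    ext p
    simp only [Pi.smul_apply, smul_eq_mul, RingHom.id_apply, ← Finset.mul_sum]
    ring

lemma perpPart_apply (π : Fin N → ℝ) (x : Fin N × Fin m → ℂ) (p : Fin N × Fin m) :
    perpPart π x p = x p - π p.1 * ∑ i, x (i, p.2) := rfl

lemma sum_perpPart_apply (hπ1 : ∑ i, π i = 1) (x : Fin N × Fin m → ℂ) (k : Fin m) :
    ∑ i, perpPart π x (i, k) = 0 := by
  simp only [perpPart_apply, Finset.sum_sub_distrib, ← Finset.sum_mul, ← Complex.ofReal_sum, hπ1,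
    Complex.ofReal_one, one_mul, sub_self]

lemma perpPart_eq_zero_of_memU (hπ1 : ∑ i, π i = 1) {a : Fin N × Fin m → ℂ} (ha : memU π a) :
    perpPart π a = 0 := by
  obtain ⟨w, hw⟩ := ha
  ext p
  simp only [perpPart_apply, hw, ← Finset.sum_mul, ← Complex.ofReal_sum, hπ1, Complex.ofReal_one,
    one_mul, sub_self, Pi.zero_apply]

lemma sum_eq_zero_of_perpU (hπ : ∀ i, 0 < π i) {b : Fin N × Fin m → ℂ} (hb : perpU π b)
    (k : Fin m) : ∑ i, b (i, k) = 0 := by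
  rw [← hb (Pi.single k 1), piInnerKron, Fintype.sum_prod_type_right,
    Finset.sum_eq_single_of_mem k (Finset.mem_univ k) fun l _ hl => by simp [hl]]
  refine Finset.sum_congr rfl fun i _ => ?_
  rw [Pi.single_eq_same, mul_one, Complex.conj_ofReal,
    mul_div_cancel_left₀ _ (Complex.ofReal_ne_zero.mpr (hπ i).ne')]

lemma eq_perpPart_of_eq_add (hπ : ∀ i, 0 < π i) (hπ1 : ∑ i, π i = 1)
    {z a b : Fin N × Fin m → ℂ} (hz : z = a + b) (ha : memU π a) (hb : perpU π b) :
    b = perpPart π z := by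
  ext p
  rw [hz, map_add, perpPart_eq_zero_of_memU hπ1 ha, zero_add, perpPart_apply,
    sum_eq_zero_of_perpU hπ hb, mul_zero, sub_zero]

lemma perpPart_kronecker_mulVec (hP : IsMarkov P) (hπ : IsStationaryMC P π)
    (y : Fin N × Fin m → ℂ) :
    perpPart π (((P.map Complex.ofReal) ⊗ₖ (1 : Matrix (Fin m) (Fin m) ℂ))ᵀ *ᵥ y) =
      ((P.map Complex.ofReal) ⊗ₖ (1 : Matrix (Fin m) (Fin m) ℂ))ᵀ *ᵥ perpPart π y := by
  ext ⟨j, k⟩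
  have hcol : ∑ j', ∑ i, (P i j' : ℂ) * y (i, k) = ∑ i, y (i, k) := by
    rw [Finset.sum_comm]
    refine Finset.sum_congr rfl fun i _ => ?_
    rw [← Finset.sum_mul, ← Complex.ofReal_sum, hP.2 i, Complex.ofReal_one, one_mul]
  have hstat : ∑ i, (P i j : ℂ) * π i = π j := by
    rw [← hπ.2.2 j]
    push_cast
    simp_rw [mul_comm]
  simp only [perpPart_apply, kronecker_one_transpose_mulVec_apply,
    transpose_map_ofReal_mulVec_apply, hcol, mul_sub, Finset.sum_sub_distrib, ← mul_assoc,
    ← Finset.sum_mul, hstat]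

lemma piNormKron_perpPart_le (hπ : ∀ i, 0 < π i) (hπ1 : ∑ i, π i = 1)
    (y : Fin N × Fin m → ℂ) : piNormKron π (perpPart π y) ≤ piNormKron π y := by
  rw [← one_mul (piNormKron π y)]
  exact piNormKron_le_of_forall_col (fun i => (hπ i).le) zero_le_one fun k =>
    (piNorm_sub_mul_sum_le hπ hπ1 _).trans_eq (one_mul _).symm

lemma piNormKron_kronecker_mulVec_le (hP : IsMarkov P) (hπ : IsStationaryMC P π)
    {y : Fin N × Fin m → ℂ} (hy : ∀ k, ∑ i, y (i, k) = 0) :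
    piNormKron π (((P.map Complex.ofReal) ⊗ₖ (1 : Matrix (Fin m) (Fin m) ℂ))ᵀ *ᵥ y) ≤
      specExp P π * piNormKron π y := by
  refine piNormKron_le_of_forall_col (fun i => (hπ.1 i).le) (specExp_nonneg P π) fun k => ?_
  simp only [kronecker_one_transpose_mulVec_apply]
  exact piNorm_transpose_mulVec_le_specExp hP hπ (hy k)

lemma piNormKron_perpPart_step (hP : IsMarkov P) (hπ : IsStationaryMC P π)
    {B : Fin N → Matrix (Fin m) (Fin m) ℂ} {e : ℝ} (he : 1 ≤ e) (hB : ∀ i, ‖B i‖ ≤ e)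
    (hB1 : ∀ i, ‖B i - 1‖ ≤ e - 1) {a b : Fin N × Fin m → ℂ} (ha : memU π a) :
    piNormKron π (perpPart π (((P.map Complex.ofReal) ⊗ₖ (1 : Matrix (Fin m) (Fin m) ℂ))ᵀ *ᵥ
      (blockDiag' B *ᵥ (a + b)))) ≤
      specExp P π * (e - 1) * piNormKron π a + specExp P π * e * piNormKron π b := by
  obtain ⟨hpos, hπ1, -⟩ := id hπ
  have hπ0 : ∀ i, 0 ≤ π i := fun i => (hpos i).le
  set v := blockDiag' B *ᵥ (a + b) with hv_def
  have hv : v - a = blockDiag' (fun i => B i - 1) *ᵥ a + blockDiag' B *ᵥ b := by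
    rw [hv_def, blockDiag'_sub_one, Matrix.sub_mulVec, Matrix.one_mulVec, Matrix.mulVec_add]
    abel
  calc _ = piNormKron π (((P.map Complex.ofReal) ⊗ₖ (1 : Matrix (Fin m) (Fin m) ℂ))ᵀ *ᵥ
          perpPart π (v - a)) := by
        rw [perpPart_kronecker_mulVec hP hπ, map_sub, perpPart_eq_zero_of_memU hπ1 ha, sub_zero]
    _ ≤ specExp P π * piNormKron π (perpPart π (v - a)) :=
        piNormKron_kronecker_mulVec_le hP hπ (sum_perpPart_apply hπ1 _)
    _ ≤ specExp P π * piNormKron π (v - a) :=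
        mul_le_mul_of_nonneg_left (piNormKron_perpPart_le hpos hπ1 _) (specExp_nonneg P π)
    _ ≤ specExp P π * ((e - 1) * piNormKron π a + e * piNormKron π b) := by
        refine mul_le_mul_of_nonneg_left ?_ (specExp_nonneg P π)
        rw [hv]
        exact (piNorm_add_le (fun p : Fin N × Fin m => hπ0 p.1) _ _).trans (add_le_add
          (piNormKron_blockDiag'_mulVec_le hπ0 (sub_nonneg.mpr he) hB1 a)
          (piNormKron_blockDiag'_mulVec_le hπ0 (zero_le_one.trans he) hB b))
    _ = _ := by ring

end Kronecker

/-- `L := c / (1 - d)` is the fixed point of `L ↦ c + d * L`, which makes `b n ≤ L * sup a` an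
inductive invariant. -/
lemma le_div_mul_sup'_of_succ_le {a b : ℕ → ℝ} {c d : ℝ} (hc : 0 ≤ c) (hd : 0 ≤ d) (hd1 : d < 1)
    (ha : ∀ n, 0 ≤ a n) (hb0 : b 0 = 0) (hb : ∀ n, b (n + 1) ≤ c * a n + d * b n)
    {i : ℕ} (hi : (Finset.range i).Nonempty) :
    b i ≤ c / (1 - d) * (Finset.range i).sup' hi a := by
  have hL : 0 ≤ c / (1 - d) := div_nonneg hc (sub_nonneg.mpr hd1.le)
  have key : ∀ n M, 0 ≤ M → (∀ j < n, a j ≤ M) → b n ≤ c / (1 - d) * M := by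
    intro n M hM haM
    induction n with
    | zero => rw [hb0]; exact mul_nonneg hL hM
    | succ n ih =>
      calc b (n + 1) ≤ c * a n + d * b n := hb n
        _ ≤ c * M + d * (c / (1 - d) * M) := by
          gcongr
          · exact haM n n.lt_succ_self
          · exact ih fun j hj => haM j (hj.trans n.lt_succ_self)
        _ = c / (1 - d) * M := by
          field_simp [(sub_pos.mpr hd1).ne']
          ring
  obtain ⟨j, hj⟩ := hi
  exact key i _ ((ha j).trans (Finset.le_sup' a hj))
    fun j hj => Finset.le_sup' a (Finset.mem_range.mpr hj)

theorem stmt_16 {N m : ℕ}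
    (P : Matrix (Fin N) (Fin N) ℝ) (π : Fin N → ℝ)
    (hP : IsMarkov P) (hπ : IsStationaryMC P π)
    (ℓ t : ℝ) (hℓ : 0 ≤ ℓ) (ht : 0 < t)
    (H : Fin N → Matrix (Fin m) (Fin m) ℂ)
    (hH : ∀ i, spectralNormM (H i) ≤ ℓ)
    (hα₄ : specExp P π * Real.exp (t * ℓ) < 1)
    (z zpar zperp : ℕ → (Fin N × Fin m → ℂ))
    (hz0perp : zperp 0 = 0)
    (hrec : ∀ i : ℕ, z (i + 1) =
      ((P.map Complex.ofReal) ⊗ₖ (1 : Matrix (Fin m) (Fin m) ℂ))ᵀ *ᵥ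
        ((blockDiag' fun v => mexp ((t : ℂ) • H v))ᴴ *ᵥ z i))
    (hdec : ∀ i, z i = zpar i + zperp i)
    (hpar : ∀ i, memU π (zpar i)) (hperp : ∀ i, perpU π (zperp i)) :
    ∀ (i : ℕ) (hi : 1 ≤ i),
      piNormKron π (zperp i) ≤
        (specExp P π * (Real.exp (t * ℓ) - 1) / (1 - specExp P π * Real.exp (t * ℓ))) *
          (Finset.range i).sup' (Finset.nonempty_range_iff.mpr (by omega))
            (fun j => piNormKron π (zpar j)) := by
  have htH : ∀ i, Real.exp ‖(t : ℂ) • H i‖ ≤ Real.exp (t * ℓ) := fun i =>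
    Real.exp_le_exp.mpr (norm_ofReal_smul_le_of_spectralNormM_le ht.le (hH i))
  have he : 1 ≤ Real.exp (t * ℓ) := Real.one_le_exp (mul_nonneg ht.le hℓ)
  have hstep : ∀ n, piNormKron π (zperp (n + 1)) ≤
      specExp P π * (Real.exp (t * ℓ) - 1) * piNormKron π (zpar n) +
        specExp P π * Real.exp (t * ℓ) * piNormKron π (zperp n) := fun n => by
    rw [eq_perpPart_of_eq_add hπ.1 hπ.2.1 (hdec (n + 1)) (hpar _) (hperp _), hrec,
      conjTranspose_blockDiag', hdec n]
    exact piNormKron_perpPart_step hP hπ he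
      (fun i => (norm_conjTranspose_mexp_le _).trans (htH i))
      (fun i => (norm_conjTranspose_mexp_sub_one_le _).trans (sub_le_sub_right (htH i) 1))
      (hpar n)
  have hperp0 : piNormKron π (zperp 0) = 0 := by simp [hz0perp, piNormKron]
  intro i hi
  exact le_div_mul_sup'_of_succ_le (a := fun j => piNormKron π (zpar j))
    (b := fun j => piNormKron π (zperp j))
    (mul_nonneg (specExp_nonneg P π) (sub_nonneg.mpr he))
    (mul_nonneg (specExp_nonneg P π) (Real.exp_pos _).le) hα₄ (fun _ => Real.sqrt_nonneg _)
    hperp0 hstep _
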